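/- arXiv:2002.10099 — 5 statements merged into one kernel-verified Lean document; each statement's English description precedes it below -/
import Mathlib

section
/- If q ∈ ℝᵈ with q ≠ 0 is a critical point of ℓ, i.e. ∇ℓ(q) = 0, then there exists an index j ∈ {1, …, d} with λ_j < 2λ such that Dq = λ_j q and ‖q‖² = 1 − λ_j/(2λ). -/
/-!
The gradient of `ℓ` at `q` has coordinates `2 (λ_i + 2λ(‖q‖² − 1)) q_i`. At a critical point every
coordinate with `q_i ≠ 0` therefore has `λ_i = μ := 2λ(1 − ‖q‖²)`, so `Dq = μ q` and `μ = λ_j` for any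
`j` in the support of `q`; solving for `‖q‖²` gives the norm, and `‖q‖² > 0` gives `λ_j < 2λ`.
-/

theorem hasGradientAt_sum_mul_sq {ι : Type*} [Fintype ι] (Λ : ι → ℝ) (q : EuclideanSpace ℝ ι) :
    HasGradientAt (fun p : EuclideanSpace ℝ ι => ∑ i, Λ i * p i ^ 2)
      (WithLp.toLp 2 fun i => 2 * Λ i * q i) q := by
  rw [hasGradientAt_iff_hasFDerivAt]
  have h : ∀ i, HasFDerivAt (fun p : EuclideanSpace ℝ ι => Λ i * p i ^ 2)
      (Λ i • (2 * q i) • EuclideanSpace.proj i) q := fun i => by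
    simpa using ((EuclideanSpace.proj i (𝕜 := ℝ)).hasFDerivAt (x := q)).pow 2 |>.const_mul (Λ i)
  refine (HasFDerivAt.fun_sum fun i _ => h i).congr_fderiv ?_
  ext y
  simp only [sum_apply, smul_apply, PiLp.proj_apply, smul_eq_mul,
    InnerProductSpace.toDual_apply_apply, PiLp.inner_apply, RCLike.inner_apply, Real.ringHom_apply]
  exact Finset.sum_congr rfl fun i _ => by ring

theorem hasGradientAt_norm_sq_sub_one_sq {F : Type*} [NormedAddCommGroup F] [InnerProductSpace ℝ F]
    [CompleteSpace F] (q : F) :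
    HasGradientAt (fun p : F => (‖p‖ ^ 2 - 1) ^ 2) ((4 * (‖q‖ ^ 2 - 1)) • q) q := by
  rw [hasGradientAt_iff_hasFDerivAt]
  refine (((hasStrictFDerivAt_norm_sq q).hasFDerivAt.sub_const 1).pow 2).congr_fderiv ?_
  ext y
  simp only [smul_apply, coe_innerSL_apply, smul_eq_mul,
    InnerProductSpace.toDual_apply_apply, real_inner_smul_left]
  ring

theorem hasGradientAt_sum_mul_sq_add_mul_norm_sq_sub_one_sq {ι : Type*} [Fintype ι]
    (Λ : ι → ℝ) (lam : ℝ) (q : EuclideanSpace ℝ ι) :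
    HasGradientAt (fun p : EuclideanSpace ℝ ι => ∑ i, Λ i * p i ^ 2 + lam * (‖p‖ ^ 2 - 1) ^ 2)
      (WithLp.toLp 2 fun i => 2 * (Λ i + 2 * lam * (‖q‖ ^ 2 - 1)) * q i) q := by
  have h1 := hasGradientAt_sum_mul_sq Λ q
  have h2 := hasGradientAt_norm_sq_sub_one_sq q
  rw [hasGradientAt_iff_hasFDerivAt] at h1 h2 ⊢
  refine (h1.add (h2.const_mul lam)).congr_fderiv ?_
  ext y
  simp only [map_smul, add_apply, smul_apply, smul_eq_mul, InnerProductSpace.toDual_apply_apply,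
    PiLp.inner_apply, RCLike.inner_apply, Real.ringHom_apply, Finset.mul_sum,
    ← Finset.sum_add_distrib]
  exact Finset.sum_congr rfl fun i _ => by ring

theorem exists_eq_and_mul_eq_mul_of_sub_mul_eq_zero {ι R : Type*} [Ring R] [NoZeroDivisors R]
    {Λ q : ι → R} {μ : R} (hq : q ≠ 0) (h : ∀ i, (Λ i - μ) * q i = 0) :
    ∃ j, Λ j = μ ∧ ∀ i, Λ i * q i = μ * q i := by
  obtain ⟨j, hj⟩ := Function.ne_iff.1 hq
  exact ⟨j, sub_eq_zero.1 ((mul_eq_zero.1 (h j)).resolve_right hj),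
    fun i => sub_eq_zero.1 (by rw [← sub_mul]; exact h i)⟩

theorem stmt2_general (d : ℕ) (Λ : Fin d → ℝ) (lam : ℝ) (hlam : 0 < lam)
    (ℓ : EuclideanSpace ℝ (Fin d) → ℝ)
    (hℓ : ∀ q : EuclideanSpace ℝ (Fin d),
      ℓ q = ∑ i, Λ i * q i ^ 2 + lam * (‖q‖ ^ 2 - 1) ^ 2)
    (q : EuclideanSpace ℝ (Fin d)) (hq : q ≠ 0) (hcrit : gradient ℓ q = 0) :
    ∃ j : Fin d, Λ j < 2 * lam ∧ (∀ i : Fin d, Λ i * q i = Λ j * q i) ∧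
      ‖q‖ ^ 2 = 1 - Λ j / (2 * lam) := by
  obtain rfl : ℓ = _ := funext hℓ
  have hgrad : ∀ i, (Λ i - 2 * lam * (1 - ‖q‖ ^ 2)) * q i = 0 := fun i => by
    have := congrArg (· i)
      ((hasGradientAt_sum_mul_sq_add_mul_norm_sq_sub_one_sq Λ lam q).gradient.symm.trans hcrit)
    simp only [PiLp.zero_apply] at this
    linear_combination this / 2
  obtain ⟨j, hj, hDq⟩ := exists_eq_and_mul_eq_mul_of_sub_mul_eq_zero (by simpa using hq) hgrad
  have hnorm : 0 < ‖q‖ ^ 2 := by positivity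
  refine ⟨j, by nlinarith, hj ▸ hDq, ?_⟩
  rw [hj]
  field_simp
  ring

/-- If `q ≠ 0` is a critical point of `ℓ(q) = qᵀDq + λ(‖q‖² − 1)²`, then there is
an index `j` with `λ_j < 2λ`, `Dq = λ_j q` and `‖q‖² = 1 − λ_j/(2λ)`. -/
theorem stmt2 (d : ℕ) (hd : 0 < d) (Λ : Fin d → ℝ) (hΛ0 : 0 ≤ Λ ⟨0, hd⟩)
    (hΛmono : Monotone Λ) (lam : ℝ) (hlam : 0 < lam)
    (ℓ : EuclideanSpace ℝ (Fin d) → ℝ)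
    (hℓ : ∀ q : EuclideanSpace ℝ (Fin d),
      ℓ q = ∑ i, Λ i * q i ^ 2 + lam * (‖q‖ ^ 2 - 1) ^ 2)
    (q : EuclideanSpace ℝ (Fin d)) (hq : q ≠ 0) (hcrit : gradient ℓ q = 0) :
    ∃ j : Fin d, Λ j < 2 * lam ∧ (∀ i : Fin d, Λ i * q i = Λ j * q i) ∧
      ‖q‖ ^ 2 = 1 - Λ j / (2 * lam) :=
  stmt2_general d Λ lam hlam ℓ hℓ q hq hcrit
end

section
/- Assume additionally that the eigenvalues are pairwise distinct, i.e. λ₁ < λ₂ < … < λ_d. Then the set of critical points of ℓ is exactly {0} ∪ {±√(1 − λ_j/(2λ)) e_j : j ∈ {1, …, d} with λ_j < 2λ}. In particular, ℓ has at most 2d + 1 critical points, and if λ > λ₁/2 then ℓ has at least 3 critical points. -/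
/-!
At a critical point every coordinate satisfies `(λ_i + 2λ(‖q‖² - 1)) q_i = 0`. The bracket can
vanish for at most one index because the `λ_i` are distinct, so a nonzero critical point is a
multiple `t e_j` of a basis vector, and then `t² = 1 - λ_j / (2λ)`, which has the two real
solutions `±√(1 - λ_j / (2λ))` exactly when `λ_j < 2λ`.
-/
open Function

theorem Set.ncard_range_le {ι α : Type*} [Finite ι] (f : ι → α) :
    (Set.range f).ncard ≤ Nat.card ι := by
  rw [← Set.image_univ, ← Set.ncard_univ]
  exact Set.ncard_image_le Set.finite_univ

section PlusMinus

variable {ι E : Type*} [AddGroup E] (p : ι → Prop) (v : ι → E)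

theorem insert_zero_setOf_eq_or_eq_neg_subset :
    insert 0 {q : E | ∃ j, p j ∧ (q = v j ∨ q = -v j)} ⊆
      insert 0 (Set.range v ∪ Set.range (-v)) := by
  rintro q (rfl | ⟨j, -, rfl | rfl⟩)
  · exact Set.mem_insert 0 _
  · exact Set.mem_insert_of_mem 0 (Or.inl ⟨j, rfl⟩)
  · exact Set.mem_insert_of_mem 0 (Or.inr ⟨j, rfl⟩)

variable [Finite ι]

theorem finite_insert_zero_setOf_eq_or_eq_neg :
    (insert 0 {q : E | ∃ j, p j ∧ (q = v j ∨ q = -v j)}).Finite :=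
  (((Set.finite_range v).union (Set.finite_range (-v))).insert 0).subset
    (insert_zero_setOf_eq_or_eq_neg_subset p v)

theorem ncard_insert_zero_setOf_eq_or_eq_neg_le :
    (insert 0 {q : E | ∃ j, p j ∧ (q = v j ∨ q = -v j)}).ncard ≤ 2 * Nat.card ι + 1 :=
  calc _ ≤ (insert 0 (Set.range v ∪ Set.range (-v))).ncard :=
        Set.ncard_le_ncard (insert_zero_setOf_eq_or_eq_neg_subset p v)
          (((Set.finite_range v).union (Set.finite_range (-v))).insert 0)
    _ ≤ (Set.range v).ncard + (Set.range (-v)).ncard + 1 :=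
        (Set.ncard_insert_le _ _).trans (Nat.add_le_add_right (Set.ncard_union_le _ _) 1)
    _ ≤ 2 * Nat.card ι + 1 := by linarith [Set.ncard_range_le v, Set.ncard_range_le (-v)]

end PlusMinus

theorem three_le_ncard_of_zero_mem {E : Type*} [AddGroup E] [IsAddTorsionFree E] {s : Set E}
    {w : E} (hs : s.Finite) (h0 : 0 ∈ s) (hw : w ∈ s) (hnw : -w ∈ s) (hw0 : w ≠ 0) :
    3 ≤ s.ncard := by
  have hsub : {0, w, -w} ⊆ s :=
    Set.insert_subset h0 (Set.insert_subset hw (Set.singleton_subset_iff.2 hnw))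
  refine (Set.ncard_le_ncard hsub hs).trans_eq' (Set.ncard_eq_three.2 ?_)
  exact ⟨0, w, -w, hw0.symm, (neg_ne_zero.2 hw0).symm, (neg_ne_self.2 hw0).symm, rfl⟩

section Loss

variable {ι : Type*} [Fintype ι]

noncomputable def loss (Λ : ι → ℝ) (lam : ℝ) (q : EuclideanSpace ℝ ι) : ℝ :=
  ∑ i, Λ i * q i ^ 2 + lam * (‖q‖ ^ 2 - 1) ^ 2

theorem hasGradientAt_loss (Λ : ι → ℝ) (lam : ℝ) (q : EuclideanSpace ℝ ι) :
    HasGradientAt (loss Λ lam)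
      (WithLp.toLp 2 fun i => 2 * ((Λ i + 2 * lam * (‖q‖ ^ 2 - 1)) * q i)) q := by
  rw [hasGradientAt_iff_hasFDerivAt]
  have hquad := HasFDerivAt.fun_sum (u := Finset.univ) fun i _ =>
    ((EuclideanSpace.proj (𝕜 := ℝ) i).hasFDerivAt (x := q).pow 2).const_mul (Λ i)
  have hpen := (((hasStrictFDerivAt_norm_sq q).hasFDerivAt.sub_const 1).pow 2).const_mul lam
  refine (hquad.add hpen).congr_fderiv ?_
  ext v
  simp only [add_apply, sum_apply, smul_apply, InnerProductSpace.toDual_apply_apply,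
    coe_innerSL_apply, EuclideanSpace.inner_eq_star_dotProduct, dotProduct, PiLp.proj_apply,
    Pi.star_apply, star_trivial, smul_eq_mul, nsmul_eq_mul, Nat.cast_ofNat, Finset.mul_sum]
  rw [← Finset.sum_add_distrib]
  exact Finset.sum_congr rfl fun i _ => by ring

variable {Λ : ι → ℝ} {lam : ℝ}

theorem gradient_loss_eq_zero_iff {q : EuclideanSpace ℝ ι} :
    gradient (loss Λ lam) q = 0 ↔ ∀ i, (Λ i + 2 * lam * (‖q‖ ^ 2 - 1)) * q i = 0 := by
  rw [(hasGradientAt_loss Λ lam q).gradient]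
  simp [← WithLp.ofLp_eq_zero, funext_iff]

variable [DecidableEq ι]

theorem eq_smul_single_of_gradient_loss_eq_zero (hΛ : Injective Λ) {q : EuclideanSpace ℝ ι}
    (hq : gradient (loss Λ lam) q = 0) {j : ι} (hj : q j ≠ 0) :
    q = q j • EuclideanSpace.single j 1 := by
  rw [gradient_loss_eq_zero_iff] at hq
  ext i
  by_cases hij : i = j
  · simp [hij]
  · simp only [PiLp.smul_apply, PiLp.single_apply, hij, if_false, smul_zero]
    by_contra hi
    have hΛi := (mul_eq_zero.1 (hq i)).resolve_right hi
    have hΛj := (mul_eq_zero.1 (hq j)).resolve_right hj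
    exact hij (hΛ (by linarith))

theorem gradient_loss_smul_single_eq_zero_iff {t : ℝ} {j : ι} :
    gradient (loss Λ lam) (t • EuclideanSpace.single j 1) = 0 ↔
      (Λ j + 2 * lam * (t ^ 2 - 1)) * t = 0 := by
  have hnorm : ‖t • EuclideanSpace.single j (1 : ℝ)‖ ^ 2 = t ^ 2 := by
    simp [norm_smul]
  rw [gradient_loss_eq_zero_iff, hnorm]
  refine ⟨fun h => by simpa using h j, fun h i => ?_⟩
  by_cases hij : i = j
  · simpa [hij] using h
  · simp [hij]

theorem gradient_loss_smul_single_eq_zero_and_ne_zero_iff (hlam : 0 < lam) {t : ℝ} {j : ι} :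
    gradient (loss Λ lam) (t • EuclideanSpace.single j 1) = 0 ∧ t ≠ 0 ↔
      Λ j < 2 * lam ∧ (t = √(1 - Λ j / (2 * lam)) ∨ t = -√(1 - Λ j / (2 * lam))) := by
  have hroot : Λ j + 2 * lam * (t ^ 2 - 1) = 0 ↔ t ^ 2 = 1 - Λ j / (2 * lam) := by
    constructor <;> intro h <;> field_simp at * <;> linarith
  have hpos : 0 < 1 - Λ j / (2 * lam) ↔ Λ j < 2 * lam := by
    rw [sub_pos, div_lt_one (by positivity)]
  rw [gradient_loss_smul_single_eq_zero_iff, mul_eq_zero]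
  constructor
  · rintro ⟨h | h, ht⟩
    · have hc := hroot.1 h
      have hcpos : 0 < 1 - Λ j / (2 * lam) := hc ▸ by positivity
      refine ⟨hpos.1 hcpos, ?_⟩
      rw [← sq_eq_sq_iff_eq_or_eq_neg, Real.sq_sqrt hcpos.le, hc]
    · exact absurd h ht
  · rintro ⟨hj, ht⟩
    have hcpos := hpos.2 hj
    refine ⟨Or.inl (hroot.2 ?_), ?_⟩
    · rw [← Real.sq_sqrt hcpos.le, sq_eq_sq_iff_eq_or_eq_neg]
      exact ht
    · rcases ht with rfl | rfl <;> simp [(Real.sqrt_pos.2 hcpos).ne']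

theorem setOf_gradient_loss_eq_zero (hΛ : Injective Λ) (hlam : 0 < lam) :
    {q : EuclideanSpace ℝ ι | gradient (loss Λ lam) q = 0} =
      insert 0 {q | ∃ j, Λ j < 2 * lam ∧
        (q = √(1 - Λ j / (2 * lam)) • EuclideanSpace.single j 1 ∨
         q = -(√(1 - Λ j / (2 * lam)) • EuclideanSpace.single j 1))} := by
  ext q
  simp only [Set.mem_ofPred_eq, Set.mem_insert_iff, ← neg_smul]
  constructor
  · intro hq
    by_cases hq0 : q = 0
    · exact Or.inl hq0
    obtain ⟨j, hj⟩ : ∃ j, q j ≠ 0 := by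
      by_contra! h
      exact hq0 (PiLp.ext h)
    have hq_eq := eq_smul_single_of_gradient_loss_eq_zero hΛ hq hj
    rw [hq_eq] at hq ⊢
    obtain ⟨hΛj, hqj⟩ := (gradient_loss_smul_single_eq_zero_and_ne_zero_iff hlam).1 ⟨hq, hj⟩
    refine Or.inr ⟨j, hΛj, ?_⟩
    rcases hqj with h | h <;> simp [h]
  · rintro (rfl | ⟨j, hΛj, rfl | rfl⟩)
    · simp [gradient_loss_eq_zero_iff]
    · exact ((gradient_loss_smul_single_eq_zero_and_ne_zero_iff hlam).2 ⟨hΛj, Or.inl rfl⟩).1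
    · exact ((gradient_loss_smul_single_eq_zero_and_ne_zero_iff hlam).2 ⟨hΛj, Or.inr rfl⟩).1

end Loss

theorem stmt3_general (d : ℕ) (hd : 0 < d) (Λ : Fin d → ℝ)
    (hΛ : StrictMono Λ) (lam : ℝ) (hlam : 0 < lam)
    (ℓ : EuclideanSpace ℝ (Fin d) → ℝ)
    (hℓ : ∀ q : EuclideanSpace ℝ (Fin d),
      ℓ q = ∑ i, Λ i * q i ^ 2 + lam * (‖q‖ ^ 2 - 1) ^ 2) :
    {q : EuclideanSpace ℝ (Fin d) | gradient ℓ q = 0} =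
      insert 0 {q : EuclideanSpace ℝ (Fin d) | ∃ j : Fin d, Λ j < 2 * lam ∧
        (q = Real.sqrt (1 - Λ j / (2 * lam)) • EuclideanSpace.single j (1 : ℝ) ∨
         q = -(Real.sqrt (1 - Λ j / (2 * lam)) • EuclideanSpace.single j (1 : ℝ)))} ∧
    {q : EuclideanSpace ℝ (Fin d) | gradient ℓ q = 0}.ncard ≤ 2 * d + 1 ∧
    (Λ ⟨0, hd⟩ / 2 < lam →
      3 ≤ {q : EuclideanSpace ℝ (Fin d) | gradient ℓ q = 0}.ncard) := by
  obtain rfl : ℓ = loss Λ lam := funext hℓ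
  have hcrit := setOf_gradient_loss_eq_zero hΛ.injective hlam
  set v : Fin d → EuclideanSpace ℝ (Fin d) :=
    fun j => √(1 - Λ j / (2 * lam)) • EuclideanSpace.single j 1
  refine ⟨hcrit, ?_, fun hΛj => ?_⟩
  · simpa [hcrit] using ncard_insert_zero_setOf_eq_or_eq_neg_le (fun j => Λ j < 2 * lam) v
  · set j : Fin d := ⟨0, hd⟩
    have hj : Λ j < 2 * lam := by linarith
    have mem : ∀ q ∈ insert 0 {q | ∃ j, Λ j < 2 * lam ∧ (q = v j ∨ q = -v j)},
        q ∈ {q | gradient (loss Λ lam) q = 0} := fun q hq => hcrit ▸ hq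
    have := IsAddTorsionFree.of_module_rat (EuclideanSpace ℝ (Fin d))
    refine three_le_ncard_of_zero_mem (w := v j) ?_ (mem _ (Or.inl rfl))
      (mem _ (Or.inr ⟨j, hj, Or.inl rfl⟩)) (mem _ (Or.inr ⟨j, hj, Or.inr rfl⟩)) ?_
    · rw [hcrit]
      exact finite_insert_zero_setOf_eq_or_eq_neg _ v
    · refine smul_ne_zero ?_ (by simp)
      exact ((gradient_loss_smul_single_eq_zero_and_ne_zero_iff hlam).2 ⟨hj, Or.inl rfl⟩).2

/-- With pairwise distinct eigenvalues `λ₁ < … < λ_d`, the set of critical points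
of `ℓ` is exactly `{0} ∪ {±√(1 − λ_j/(2λ)) e_j : λ_j < 2λ}`; in particular there are at most
`2d + 1` critical points, and at least `3` when `λ > λ₁/2`. -/
theorem stmt3 (d : ℕ) (hd : 0 < d) (Λ : Fin d → ℝ) (hΛ0 : 0 ≤ Λ ⟨0, hd⟩)
    (hΛ : StrictMono Λ) (lam : ℝ) (hlam : 0 < lam)
    (ℓ : EuclideanSpace ℝ (Fin d) → ℝ)
    (hℓ : ∀ q : EuclideanSpace ℝ (Fin d),
      ℓ q = ∑ i, Λ i * q i ^ 2 + lam * (‖q‖ ^ 2 - 1) ^ 2) :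
    {q : EuclideanSpace ℝ (Fin d) | gradient ℓ q = 0} =
      insert 0 {q : EuclideanSpace ℝ (Fin d) | ∃ j : Fin d, Λ j < 2 * lam ∧
        (q = Real.sqrt (1 - Λ j / (2 * lam)) • EuclideanSpace.single j (1 : ℝ) ∨
         q = -(Real.sqrt (1 - Λ j / (2 * lam)) • EuclideanSpace.single j (1 : ℝ)))} ∧
    {q : EuclideanSpace ℝ (Fin d) | gradient ℓ q = 0}.ncard ≤ 2 * d + 1 ∧
    (Λ ⟨0, hd⟩ / 2 < lam →
      3 ≤ {q : EuclideanSpace ℝ (Fin d) | gradient ℓ q = 0}.ncard) :=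
  stmt3_general d hd Λ hΛ lam hlam ℓ hℓ
end

section
/- Assume λ > λ₁/2 and λ₁ < λ₂. Then for every q ∈ ℝᵈ one has ℓ(q) ≥ λ₁ − λ₁²/(4λ), with equality if and only if q = √(1 − λ₁/(2λ)) e₁ or q = −√(1 − λ₁/(2λ)) e₁. In particular these two points are the global minima of ℓ and ℓ(±√(1 − λ₁/(2λ)) e₁) = λ₁ − λ₁²/(4λ). -/
/-!
Completing the square in `‖q‖²` gives, with `μ = λ₁`,
`ℓ(q) - (μ - μ²/(4λ)) = ∑ᵢ (λᵢ - μ) qᵢ² + λ (‖q‖² - (1 - μ/(2λ)))²`,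
a sum of two nonnegative terms. Equality forces `qᵢ = 0` whenever `λᵢ > λ₁` (so `q` lies on
the line through `e₁`) and `‖q‖² = 1 - μ/(2λ)`, which is positive since `λ > λ₁/2`.
-/

open Finset

variable {ι : Type*} [Fintype ι]

noncomputable def penalizedLoss (Λ : ι → ℝ) (lam : ℝ) (q : EuclideanSpace ℝ ι) : ℝ :=
  ∑ i, Λ i * q i ^ 2 + lam * (‖q‖ ^ 2 - 1) ^ 2

lemma EuclideanSpace.norm_sq_eq_sum_sq (q : EuclideanSpace ℝ ι) : ‖q‖ ^ 2 = ∑ i, q i ^ 2 := by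
  simp only [EuclideanSpace.norm_sq_eq, Real.norm_eq_abs, sq_abs]

lemma penalizedLoss_sub_eq (Λ : ι → ℝ) {lam : ℝ} (hlam : lam ≠ 0) (μ : ℝ)
    (q : EuclideanSpace ℝ ι) :
    penalizedLoss Λ lam q - (μ - μ ^ 2 / (4 * lam)) =
      ∑ i, (Λ i - μ) * q i ^ 2 + lam * (‖q‖ ^ 2 - (1 - μ / (2 * lam))) ^ 2 := by
  have hsplit : ∑ i, (Λ i - μ) * q i ^ 2 = ∑ i, Λ i * q i ^ 2 - μ * ‖q‖ ^ 2 := by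
    rw [EuclideanSpace.norm_sq_eq_sum_sq, mul_sum, ← sum_sub_distrib]
    exact sum_congr rfl fun i _ => by ring
  rw [penalizedLoss, hsplit]
  field_simp
  ring

variable {Λ : ι → ℝ} {lam μ : ℝ}

theorem le_penalizedLoss (hμ : ∀ i, μ ≤ Λ i) (hlam : 0 < lam) (q : EuclideanSpace ℝ ι) :
    μ - μ ^ 2 / (4 * lam) ≤ penalizedLoss Λ lam q := by
  have hsum : 0 ≤ ∑ i, (Λ i - μ) * q i ^ 2 :=
    sum_nonneg fun i _ => mul_nonneg (sub_nonneg.2 (hμ i)) (sq_nonneg _)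
  have hpen : 0 ≤ lam * (‖q‖ ^ 2 - (1 - μ / (2 * lam))) ^ 2 := by positivity
  linarith [penalizedLoss_sub_eq Λ hlam.ne' μ q]

theorem penalizedLoss_eq_iff {i₀ : ι} (hmin : ∀ i ≠ i₀, Λ i₀ < Λ i) (hlam : 0 < lam)
    (q : EuclideanSpace ℝ ι) :
    penalizedLoss Λ lam q = Λ i₀ - Λ i₀ ^ 2 / (4 * lam) ↔
      (∀ i ≠ i₀, q i = 0) ∧ ‖q‖ ^ 2 = 1 - Λ i₀ / (2 * lam) := by
  have hgap : ∀ i, 0 ≤ Λ i - Λ i₀ := fun i => by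
    rcases eq_or_ne i i₀ with rfl | hi
    · simp
    · exact sub_nonneg.2 (hmin i hi).le
  have hterm : ∀ i ∈ univ, 0 ≤ (Λ i - Λ i₀) * q i ^ 2 :=
    fun i _ => mul_nonneg (hgap i) (sq_nonneg _)
  rw [← sub_eq_zero, penalizedLoss_sub_eq Λ hlam.ne',
    add_eq_zero_iff_of_nonneg (sum_nonneg hterm) (by positivity), sum_eq_zero_iff_of_nonneg hterm,
    mul_eq_zero, or_iff_right hlam.ne', sq_eq_zero_iff, sub_eq_zero]
  refine and_congr_left' ⟨fun h i hi => ?_, fun h i _ => ?_⟩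
  · simpa [(sub_pos.2 (hmin i hi)).ne'] using h i (mem_univ i)
  · rcases eq_or_ne i i₀ with rfl | hi
    · simp
    · simp [h i hi]

omit [Fintype ι] in
lemma EuclideanSpace.eq_smul_single_iff [DecidableEq ι] (q : EuclideanSpace ℝ ι) (i₀ : ι) :
    q = q i₀ • EuclideanSpace.single i₀ 1 ↔ ∀ i ≠ i₀, q i = 0 := by
  constructor
  · intro h i hi
    rw [h]
    simp [hi]
  · intro h
    ext i
    rcases eq_or_ne i i₀ with rfl | hi
    · simp
    · simp [hi, h i hi]

lemma EuclideanSpace.eq_smul_single_or_eq_neg_iff [DecidableEq ι] (q : EuclideanSpace ℝ ι)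
    (i₀ : ι) (s : ℝ) :
    q = s • EuclideanSpace.single i₀ 1 ∨ q = -(s • EuclideanSpace.single i₀ 1) ↔
      (∀ i ≠ i₀, q i = 0) ∧ ‖q‖ ^ 2 = s ^ 2 := by
  have hnorm_sq : ∀ c : ℝ, ‖c • EuclideanSpace.single i₀ (1 : ℝ)‖ ^ 2 = c ^ 2 := fun c => by
    rw [norm_smul, PiLp.norm_single, norm_one, mul_one, Real.norm_eq_abs, sq_abs]
  rw [← EuclideanSpace.eq_smul_single_iff]
  constructor
  · rintro (rfl | rfl)
    · simp [hnorm_sq]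
    · simp [norm_neg, hnorm_sq]
  · rintro ⟨hq, hnorm⟩
    rw [hq, hnorm_sq, sq_eq_sq_iff_eq_or_eq_neg] at hnorm
    rcases hnorm with h | h
    · exact Or.inl (by rw [hq, h])
    · exact Or.inr (by rw [hq, h, neg_smul])

/-- If `λ > λ₁/2` and `λ₁ < λ₂`, then `ℓ(q) ≥ λ₁ − λ₁²/(4λ)` for every `q`,
with equality iff `q = ±√(1 − λ₁/(2λ)) e₁`; these two points are the global minima of `ℓ`. -/
theorem stmt4 (d : ℕ) (hd : 2 ≤ d) (Λ : Fin d → ℝ)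
    (hΛmono : Monotone Λ) (lam : ℝ) (hlam : 0 < lam)
    (ℓ : EuclideanSpace ℝ (Fin d) → ℝ)
    (hℓ : ∀ q : EuclideanSpace ℝ (Fin d),
      ℓ q = ∑ i, Λ i * q i ^ 2 + lam * (‖q‖ ^ 2 - 1) ^ 2)
    (hlam1 : Λ ⟨0, by omega⟩ / 2 < lam)
    (h12 : Λ ⟨0, by omega⟩ < Λ ⟨1, by omega⟩) :
    ∀ q : EuclideanSpace ℝ (Fin d),
      Λ ⟨0, by omega⟩ - (Λ ⟨0, by omega⟩) ^ 2 / (4 * lam) ≤ ℓ q ∧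
      (ℓ q = Λ ⟨0, by omega⟩ - (Λ ⟨0, by omega⟩) ^ 2 / (4 * lam) ↔
        q = Real.sqrt (1 - Λ ⟨0, by omega⟩ / (2 * lam)) •
              EuclideanSpace.single (⟨0, by omega⟩ : Fin d) (1 : ℝ) ∨
        q = -(Real.sqrt (1 - Λ ⟨0, by omega⟩ / (2 * lam)) •
              EuclideanSpace.single (⟨0, by omega⟩ : Fin d) (1 : ℝ))) := by
  intro q
  set i₀ : Fin d := ⟨0, by omega⟩
  have hmin : ∀ i ≠ i₀, Λ i₀ < Λ i := fun i hi =>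
    h12.trans_le (hΛmono (Fin.le_def.2 (Nat.one_le_iff_ne_zero.2 (Fin.val_ne_iff.2 hi))))
  have hradius : 0 ≤ 1 - Λ i₀ / (2 * lam) := by
    rw [sub_nonneg, div_le_one (by positivity)]
    linarith
  rw [hℓ q]
  refine ⟨le_penalizedLoss (fun i => hΛmono (Fin.le_def.2 (Nat.zero_le _))) hlam q, ?_⟩
  rw [EuclideanSpace.eq_smul_single_or_eq_neg_iff, Real.sq_sqrt hradius]
  exact penalizedLoss_eq_iff hmin hlam q
end

section
/- Let j ∈ {2, …, d} with λ_j < 2λ and λ₁ < λ_j, and set q_j = √(1 − λ_j/(2λ)) e_j. Then the Hessian of ℓ at ±q_j has a strictly negative eigenvalue; specifically e₁ᵀ ∇²ℓ(±q_j) e₁ = 2(λ₁ − λ_j) < 0. Hence ±q_j are strict saddle points or local maxima of ℓ. -/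
/-!
Along the line `t ↦ p + t e₁` through a point `p` with `p₁ = 0`, the loss is the even quartic
`ℓ p + (λ₁ + 2λ(‖p‖² - 1)) t² + λ t⁴`, and twice its `t²`-coefficient is the Hessian entry
`e₁ᵀ ∇²ℓ(p) e₁`. At `±q_j` we have `‖q_j‖² = 1 - λ_j / (2λ)`, so this coefficient is
`λ₁ - λ_j < 0`: the Hessian entry is negative and `t = 0` is not a local minimum of the quartic.
-/

open Filter Topology
open scoped RealInnerProductSpace

theorem not_isLocalMin_quadratic_add_quartic {a : ℝ} (ha : a < 0) (b c : ℝ) :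
    ¬ IsLocalMin (fun t : ℝ => c + a * t ^ 2 + b * t ^ 4) 0 := by
  intro hmin
  have hneg : ∀ᶠ t in 𝓝 (0 : ℝ), a + b * t ^ 2 < 0 := by
    have : Tendsto (fun t : ℝ => a + b * t ^ 2) (𝓝 0) (𝓝 a) := by
      simpa using ((continuous_pow 2).const_mul b |>.const_add a).tendsto 0
    exact this.eventually (gt_mem_nhds ha)
  obtain ⟨t, ⟨hle, hlt⟩, ht : t ≠ 0⟩ :=
    (((hmin.and hneg).filter_mono nhdsWithin_le_nhds).and
      (self_mem_nhdsWithin : ∀ᶠ t in 𝓝[≠] (0 : ℝ), t ≠ 0)).exists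
  have : 0 < t ^ 2 := by positivity
  simp only at hle
  nlinarith

section QuarticLoss

variable {F : Type*} [NormedAddCommGroup F] [InnerProductSpace ℝ F]
  (B : F →L[ℝ] F →L[ℝ] ℝ) (lam : ℝ)

noncomputable def quarticLoss (q : F) : ℝ := B q q + lam * (‖q‖ ^ 2 - 1) ^ 2

theorem hasFDerivAt_quarticLoss (q : F) :
    HasFDerivAt (quarticLoss B lam)
      (B q + B.flip q + (4 * lam * (‖q‖ ^ 2 - 1)) • innerSL ℝ q) q := by
  have hquad := B.hasFDerivAt_of_bilinear (hasFDerivAt_id q) (hasFDerivAt_id q)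
  have hpen := ((((hasStrictFDerivAt_norm_sq q).hasFDerivAt).sub_const 1).pow 2).const_mul lam
  refine (hquad.add hpen).congr_fderiv ?_
  ext v
  simp only [id_eq, ContinuousLinearMap.precompR_apply, ContinuousLinearMap.compL_apply,
    ContinuousLinearMap.comp_id, Nat.add_one_sub_one, pow_one, nsmul_eq_mul, Nat.cast_ofNat,
    add_apply, ContinuousLinearMap.precompL_apply, ContinuousLinearMap.id_apply, smul_apply,
    coe_innerSL_apply, smul_eq_mul, ContinuousLinearMap.flip_apply]
  ring

theorem fderiv_quarticLoss :
    fderiv ℝ (quarticLoss B lam) =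
      fun q => B q + B.flip q + (4 * lam * (‖q‖ ^ 2 - 1)) • innerSL ℝ q :=
  funext fun q => (hasFDerivAt_quarticLoss B lam q).fderiv

theorem fderiv_fderiv_quarticLoss_apply (p u v : F) :
    fderiv ℝ (fderiv ℝ (quarticLoss B lam)) p u v =
      B u v + B v u + 4 * lam * (‖p‖ ^ 2 - 1) * ⟪u, v⟫ + 8 * lam * ⟪p, u⟫ * ⟪p, v⟫ := by
  have hcoef : HasFDerivAt (fun q : F => 4 * lam * (‖q‖ ^ 2 - 1))
      ((4 * lam) • 2 • innerSL ℝ p) p :=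
    ((hasStrictFDerivAt_norm_sq p).hasFDerivAt.sub_const 1).const_mul (4 * lam)
  have h : HasFDerivAt (fun q => B q + B.flip q + (4 * lam * (‖q‖ ^ 2 - 1)) • innerSL ℝ q) _ p :=
    (B.hasFDerivAt.add B.flip.hasFDerivAt).add (hcoef.smul (innerSL ℝ).hasFDerivAt)
  rw [fderiv_quarticLoss, h.fderiv]
  simp only [add_apply, smul_apply, ContinuousLinearMap.smulRight_apply, coe_innerSL_apply,
    nsmul_eq_mul, Nat.cast_ofNat, smul_eq_mul, ContinuousLinearMap.flip_apply]
  rw [innerSL_apply_apply, innerSL_apply_apply]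
  ring

variable {B lam} {p e : F} (he : ‖e‖ = 1) (hpe : ⟪p, e⟫ = 0) (hBpe : B p e = 0)
  (hBep : B e p = 0)
include he hpe hBpe hBep

theorem quarticLoss_add_smul (t : ℝ) :
    quarticLoss B lam (p + t • e) =
      quarticLoss B lam p + (B e e + 2 * lam * (‖p‖ ^ 2 - 1)) * t ^ 2 + lam * t ^ 4 := by
  simp only [quarticLoss, map_add, map_smul, add_apply, smul_apply, smul_eq_mul, hBpe, hBep,
    norm_add_sq_real, inner_smul_right, hpe, norm_smul, Real.norm_eq_abs, he, mul_one, sq_abs]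
  ring

theorem not_isLocalMin_quarticLoss (hneg : B e e + 2 * lam * (‖p‖ ^ 2 - 1) < 0) :
    ¬ IsLocalMin (quarticLoss B lam) p := by
  intro hmin
  have hline : IsLocalMin (quarticLoss B lam ∘ fun t : ℝ => p + t • e) 0 :=
    IsLocalMin.comp_continuous (by simpa using hmin) (by fun_prop)
  refine not_isLocalMin_quadratic_add_quartic hneg lam (quarticLoss B lam p) ?_
  simpa only [Function.comp_def, quarticLoss_add_smul he hpe hBpe hBep] using hline

end QuarticLoss

section DiagForm

variable {ι : Type*} [Fintype ι]

noncomputable def diagForm (Λ : ι → ℝ) :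
    EuclideanSpace ℝ ι →L[ℝ] EuclideanSpace ℝ ι →L[ℝ] ℝ :=
  ∑ i, Λ i • (EuclideanSpace.proj i).smulRight (EuclideanSpace.proj i)

theorem diagForm_apply (Λ : ι → ℝ) (x y : EuclideanSpace ℝ ι) :
    diagForm Λ x y = ∑ i, Λ i * x i * y i := by
  simp [diagForm, mul_assoc]

variable [DecidableEq ι]

theorem diagForm_apply_single (Λ : ι → ℝ) (x : EuclideanSpace ℝ ι) (i : ι) :
    diagForm Λ x (EuclideanSpace.single i 1) = Λ i * x i := by
  simp [diagForm_apply, PiLp.single_apply]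

theorem diagForm_single_apply (Λ : ι → ℝ) (x : EuclideanSpace ℝ ι) (i : ι) :
    diagForm Λ (EuclideanSpace.single i 1) x = Λ i * x i := by
  simp [diagForm_apply, PiLp.single_apply]

end DiagForm

theorem stmt6_general (d : ℕ) (hd : 0 < d) (Λ : Fin d → ℝ) (lam : ℝ) (hlam : 0 < lam)
    (ℓ : EuclideanSpace ℝ (Fin d) → ℝ)
    (hℓ : ∀ q : EuclideanSpace ℝ (Fin d),
      ℓ q = ∑ i, Λ i * q i ^ 2 + lam * (‖q‖ ^ 2 - 1) ^ 2)
    (j : Fin d) (hj : Λ j < 2 * lam)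
    (hj1 : Λ ⟨0, hd⟩ < Λ j)
    (qj : EuclideanSpace ℝ (Fin d))
    (hqj : qj = Real.sqrt (1 - Λ j / (2 * lam)) • EuclideanSpace.single j (1 : ℝ)) :
    (fderiv ℝ (fderiv ℝ ℓ) qj
        (EuclideanSpace.single (⟨0, hd⟩ : Fin d) (1 : ℝ))
        (EuclideanSpace.single (⟨0, hd⟩ : Fin d) (1 : ℝ)) = 2 * (Λ ⟨0, hd⟩ - Λ j)) ∧
    (fderiv ℝ (fderiv ℝ ℓ) (-qj)
        (EuclideanSpace.single (⟨0, hd⟩ : Fin d) (1 : ℝ))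
        (EuclideanSpace.single (⟨0, hd⟩ : Fin d) (1 : ℝ)) = 2 * (Λ ⟨0, hd⟩ - Λ j)) ∧
    2 * (Λ ⟨0, hd⟩ - Λ j) < 0 ∧
    ¬ IsLocalMin ℓ qj ∧ ¬ IsLocalMin ℓ (-qj) := by
  set i0 : Fin d := ⟨0, hd⟩
  set e := EuclideanSpace.single i0 (1 : ℝ)
  have hℓB : ℓ = quarticLoss (diagForm Λ) lam := funext fun q => by
    simp [hℓ, quarticLoss, diagForm_apply, sq, mul_assoc]
  have hsaddle : ∀ p : EuclideanSpace ℝ (Fin d), p i0 = 0 → ‖p‖ ^ 2 = 1 - Λ j / (2 * lam) →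
      fderiv ℝ (fderiv ℝ ℓ) p e e = 2 * (Λ i0 - Λ j) ∧ ¬ IsLocalMin ℓ p := by
    intro p hp hnorm
    have hcoef : diagForm Λ e e + 2 * lam * (‖p‖ ^ 2 - 1) = Λ i0 - Λ j := by
      rw [diagForm_apply_single, hnorm]
      field_simp
      simp only [e, PiLp.single_eq_same]
      ring
    have hpe : ⟪p, e⟫ = 0 := by simp [e, EuclideanSpace.inner_single_right, hp]
    have hBpe : diagForm Λ p e = 0 := by simp [e, diagForm_apply_single, hp]
    have hBep : diagForm Λ e p = 0 := by simp [e, diagForm_single_apply, hp]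
    subst hℓB
    refine ⟨?_, not_isLocalMin_quarticLoss (by simp [e]) hpe hBpe hBep (by linarith)⟩
    rw [fderiv_fderiv_quarticLoss_apply, hpe, real_inner_self_eq_norm_sq]
    simp only [e, PiLp.norm_single, norm_one, one_pow, mul_zero, add_zero]
    linear_combination 2 * hcoef
  have hne : i0 ≠ j := fun h => hj1.ne (congrArg Λ h)
  have hq0 : qj i0 = 0 := by simp [hqj, hne]
  have hqnorm : ‖qj‖ ^ 2 = 1 - Λ j / (2 * lam) := by
    have : Λ j / (2 * lam) < 1 := (div_lt_one (by positivity)).2 hj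
    simp [hqj, norm_smul, Real.sq_sqrt (by linarith : (0 : ℝ) ≤ 1 - Λ j / (2 * lam))]
  obtain ⟨hhess, hmin⟩ := hsaddle qj hq0 hqnorm
  obtain ⟨hhess', hmin'⟩ := hsaddle (-qj) (by simp [hq0]) (by rwa [norm_neg])
  exact ⟨hhess, hhess', by linarith, hmin, hmin'⟩

/-- For `j ≥ 2` with `λ_j < 2λ` and `λ₁ < λ_j`, at `±q_j = ±√(1 − λ_j/(2λ)) e_j`
the Hessian of `ℓ` has a strictly negative eigenvalue: `e₁ᵀ ∇²ℓ(±q_j) e₁ = 2(λ₁ − λ_j) < 0`;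
hence `±q_j` are not local minima (they are strict saddle points or local maxima). -/
theorem stmt6 (d : ℕ) (hd : 0 < d) (Λ : Fin d → ℝ) (hΛ0 : 0 ≤ Λ ⟨0, hd⟩)
    (hΛmono : Monotone Λ) (lam : ℝ) (hlam : 0 < lam)
    (ℓ : EuclideanSpace ℝ (Fin d) → ℝ)
    (hℓ : ∀ q : EuclideanSpace ℝ (Fin d),
      ℓ q = ∑ i, Λ i * q i ^ 2 + lam * (‖q‖ ^ 2 - 1) ^ 2)
    (j : Fin d) (hj2 : (⟨0, hd⟩ : Fin d) < j) (hj : Λ j < 2 * lam)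
    (hj1 : Λ ⟨0, hd⟩ < Λ j)
    (qj : EuclideanSpace ℝ (Fin d))
    (hqj : qj = Real.sqrt (1 - Λ j / (2 * lam)) • EuclideanSpace.single j (1 : ℝ)) :
    (fderiv ℝ (fderiv ℝ ℓ) qj
        (EuclideanSpace.single (⟨0, hd⟩ : Fin d) (1 : ℝ))
        (EuclideanSpace.single (⟨0, hd⟩ : Fin d) (1 : ℝ)) = 2 * (Λ ⟨0, hd⟩ - Λ j)) ∧
    (fderiv ℝ (fderiv ℝ ℓ) (-qj)
        (EuclideanSpace.single (⟨0, hd⟩ : Fin d) (1 : ℝ))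
        (EuclideanSpace.single (⟨0, hd⟩ : Fin d) (1 : ℝ)) = 2 * (Λ ⟨0, hd⟩ - Λ j)) ∧
    2 * (Λ ⟨0, hd⟩ - Λ j) < 0 ∧
    ¬ IsLocalMin ℓ qj ∧ ¬ IsLocalMin ℓ (-qj) :=
  stmt6_general d hd Λ lam hlam ℓ hℓ j hj hj1 qj hqj
end

section
/- Let D be a symmetric positive semidefinite d×d real matrix, let λ > 0, and let v ∈ ℝᵈ satisfy ‖v‖ = 1 and ker D = span{v}. Define ℓ(q) = qᵀDq + λ(‖q‖² − 1)² and h(q) = ‖q − v‖² / (1 + ‖q‖²). Then for every q ∈ ℝᵈ with vᵀq > 0, one has ⟨∇h(q), ∇ℓ(q)⟩ ≥ 0, with equality if and only if q = v. In particular, h is strictly decreasing along the gradient flow dq/dt = −∇ℓ(q) at every point of the half-space {q : vᵀq > 0} other than v. -/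
/-!
Both gradients are explicit: `∇ℓ(q) = 2Dq + 4λ(‖q‖² - 1)q` and
`∇h(q) = 2(q - v)/(1 + ‖q‖²) - 2‖q - v‖² q/(1 + ‖q‖²)²`. Since `Dv = 0`, all the cross terms
cancel and `⟨∇h(q), ∇ℓ(q)⟩ = 8 ⟨v, q⟩ ℓ(q) / (1 + ‖q‖²)²`. On the half-space `⟨v, q⟩ > 0` this is
nonnegative because `ℓ ≥ 0`, and it vanishes exactly where `ℓ` does, i.e. where `Dq = 0` and
`‖q‖ = 1`; the kernel condition then leaves only `q = ±v`, and the sign of `⟨v, q⟩` picks `v`.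
-/

open scoped Matrix RealInnerProductSpace

section InnerProductSpace

variable {E : Type*} [NormedAddCommGroup E] [InnerProductSpace ℝ E]

theorem LinearMap.IsPositive.apply_eq_zero_of_inner_self_eq_zero {T : E →ₗ[ℝ] E}
    (hT : T.IsPositive) {x : E} (hx : ⟪T x, x⟫ = 0) : T x = 0 := by
  -- `t ↦ ⟪T (x + t • T x), x + t • T x⟫` is a nonnegative quadratic without constant term,
  -- so its linear coefficient `2‖T x‖²` vanishes
  have hquad : ∀ t : ℝ, 0 ≤ ⟪T (T x), T x⟫ * (t * t) + 2 * ‖T x‖ ^ 2 * t + 0 := fun t => by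
    have h := hT.inner_nonneg_left (x + t • T x)
    simp only [map_add, map_smul, inner_add_left, inner_add_right, real_inner_smul_left,
      real_inner_smul_right, hx, hT.isSymmetric (T x) x, real_inner_self_eq_norm_sq] at h
    linarith
  have hdiscr := discrim_le_zero hquad
  rw [discrim, mul_zero, sub_zero] at hdiscr
  simpa using le_antisymm hdiscr (sq_nonneg _)

theorem smul_eq_self_of_norm_eq_one {v : E} (hv : ‖v‖ = 1) {t : ℝ} (ht : ‖t • v‖ = 1)
    (hpos : 0 < ⟪v, t • v⟫) : t • v = v := by
  rw [norm_smul, hv, mul_one, Real.norm_eq_abs] at ht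
  rw [real_inner_smul_right, real_inner_self_eq_norm_sq, hv, one_pow, mul_one] at hpos
  rw [abs_of_pos hpos] at ht
  rw [ht, one_smul]

noncomputable def penalizedQuadForm (T : E →L[ℝ] E) (lam : ℝ) (q : E) : ℝ :=
  ⟪T q, q⟫ + lam * (‖q‖ ^ 2 - 1) ^ 2

noncomputable def liapunovFn (v q : E) : ℝ :=
  ‖q - v‖ ^ 2 / (1 + ‖q‖ ^ 2)

theorem penalizedQuadForm_nonneg {T : E →L[ℝ] E} (hT : T.IsPositive) {lam : ℝ}
    (hlam : 0 ≤ lam) (q : E) : 0 ≤ penalizedQuadForm T lam q :=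
  add_nonneg (hT.inner_nonneg_left q) (by positivity)

theorem penalizedQuadForm_eq_zero_iff {T : E →L[ℝ] E} (hT : T.IsPositive) {lam : ℝ}
    (hlam : 0 < lam) {q : E} : penalizedQuadForm T lam q = 0 ↔ T q = 0 ∧ ‖q‖ = 1 := by
  rw [penalizedQuadForm, add_eq_zero_iff_of_nonneg (hT.inner_nonneg_left q) (by positivity),
    mul_eq_zero, or_iff_right hlam.ne', pow_eq_zero_iff two_ne_zero, sub_eq_zero,
    pow_eq_one_iff_of_nonneg (norm_nonneg q) two_ne_zero]
  exact and_congr_left' ⟨hT.toLinearMap.apply_eq_zero_of_inner_self_eq_zero, fun h => by simp [h]⟩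

end InnerProductSpace

section HilbertSpace

variable {E : Type*} [NormedAddCommGroup E] [InnerProductSpace ℝ E] [CompleteSpace E]

theorem hasGradientAt_penalizedQuadForm {T : E →L[ℝ] E} (hT : T.IsSymmetric) (lam : ℝ) (q : E) :
    HasGradientAt (penalizedQuadForm T lam) ((2 : ℝ) • T q + (4 * lam * (‖q‖ ^ 2 - 1)) • q) q := by
  have hquad : HasFDerivAt (fun x => ⟪T x, x⟫) (2 • innerSL ℝ (T q)) q :=
    (hT.hasStrictFDerivAt_reApplyInnerSelf q).hasFDerivAt
  have hpen := (((hasStrictFDerivAt_norm_sq q).hasFDerivAt.sub_const 1).pow 2).const_mul lam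
  rw [hasGradientAt_iff_hasFDerivAt]
  refine (hquad.add hpen).congr_fderiv ?_
  ext w
  simp only [add_apply, smul_apply, coe_innerSL_apply, InnerProductSpace.toDual_apply_apply,
    map_add, map_smul, real_inner_comm, nsmul_eq_mul, smul_eq_mul, Nat.cast_ofNat, pow_one,
    Nat.add_one_sub_one, add_right_inj]
  ring

theorem hasGradientAt_liapunovFn (v q : E) :
    HasGradientAt (liapunovFn v)
      ((2 / (1 + ‖q‖ ^ 2)) • (q - v) - (2 * ‖q - v‖ ^ 2 / (1 + ‖q‖ ^ 2) ^ 2) • q) q := by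
  have hpos : 1 + ‖q‖ ^ 2 ≠ 0 := by positivity
  have hnum := ((hasFDerivAt_id q).sub_const v).norm_sq
  have hden := (hasDerivAt_inv hpos).comp_hasFDerivAt q
    ((hasStrictFDerivAt_norm_sq q).hasFDerivAt.const_add 1)
  rw [hasGradientAt_iff_hasFDerivAt, show liapunovFn v = fun x => ‖x - v‖ ^ 2 * (1 + ‖x‖ ^ 2)⁻¹
    from funext fun x => div_eq_mul_inv _ _]
  refine (hnum.mul hden).congr_fderiv ?_
  ext w
  simp only [add_apply, smul_apply, neg_apply, sub_apply, ContinuousLinearMap.comp_id,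
    Function.comp_apply, coe_innerSL_apply, InnerProductSpace.toDual_apply_apply, map_sub,
    map_smul, neg_smul, smul_neg, nsmul_eq_mul, smul_eq_mul, Nat.cast_ofNat, id_eq]
  field_simp
  ring

theorem inner_gradient_liapunovFn_penalizedQuadForm {T : E →L[ℝ] E} (hT : T.IsSymmetric)
    {v : E} (hTv : T v = 0) (hv : ‖v‖ = 1) (lam : ℝ) (q : E) :
    ⟪gradient (liapunovFn v) q, gradient (penalizedQuadForm T lam) q⟫ =
      8 * ⟪v, q⟫ * penalizedQuadForm T lam q / (1 + ‖q‖ ^ 2) ^ 2 := by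
  have hvTq : ⟪v, T q⟫ = 0 := by rw [← hT.apply_clm, hTv, inner_zero_left]
  have hpos : 1 + ‖q‖ ^ 2 ≠ 0 := by positivity
  rw [(hasGradientAt_liapunovFn v q).gradient, (hasGradientAt_penalizedQuadForm hT lam q).gradient,
    penalizedQuadForm]
  simp only [inner_sub_left, inner_add_right, real_inner_smul_left, real_inner_smul_right,
    hvTq, real_inner_self_eq_norm_sq, norm_sub_sq_real q v, hv, real_inner_comm q v,
    real_inner_comm q (T q)]
  field_simp
  ring

theorem inner_gradient_liapunovFn_penalizedQuadForm_nonneg {T : E →L[ℝ] E} (hT : T.IsPositive)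
    {v : E} (hTv : T v = 0) (hv : ‖v‖ = 1) {lam : ℝ} (hlam : 0 ≤ lam) {q : E}
    (hq : 0 < ⟪v, q⟫) :
    0 ≤ ⟪gradient (liapunovFn v) q, gradient (penalizedQuadForm T lam) q⟫ := by
  rw [inner_gradient_liapunovFn_penalizedQuadForm hT.isSymmetric hTv hv]
  have := penalizedQuadForm_nonneg hT hlam q
  positivity

theorem inner_gradient_liapunovFn_penalizedQuadForm_eq_zero_iff {T : E →L[ℝ] E}
    (hT : T.IsPositive) {v : E} (hker : ∀ x, T x = 0 ↔ ∃ t : ℝ, x = t • v) (hv : ‖v‖ = 1)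
    {lam : ℝ} (hlam : 0 < lam) {q : E} (hq : 0 < ⟪v, q⟫) :
    ⟪gradient (liapunovFn v) q, gradient (penalizedQuadForm T lam) q⟫ = 0 ↔ q = v := by
  have hTv : T v = 0 := (hker v).mpr ⟨1, (one_smul ℝ v).symm⟩
  rw [inner_gradient_liapunovFn_penalizedQuadForm hT.isSymmetric hTv hv, div_eq_zero_iff,
    or_iff_left (by positivity), mul_eq_zero, or_iff_right (by positivity),
    penalizedQuadForm_eq_zero_iff hT hlam]
  constructor
  · rintro ⟨hTq, hq1⟩
    obtain ⟨t, rfl⟩ := (hker q).mp hTq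
    exact smul_eq_self_of_norm_eq_one hv hq1 hq
  · rintro rfl
    exact ⟨hTv, hv⟩

end HilbertSpace

/-- For symmetric positive semidefinite `D`, `λ > 0`, `‖v‖ = 1` and
`ker D = span{v}`, with `ℓ(q) = qᵀDq + λ(‖q‖² − 1)²` and `h(q) = ‖q − v‖²/(1 + ‖q‖²)`,
one has `⟨∇h(q), ∇ℓ(q)⟩ ≥ 0` on the half-space `{q : vᵀq > 0}`, with equality iff `q = v`;
in particular `h` is strictly decreasing along the gradient flow `dq/dt = −∇ℓ(q)` there. -/
theorem stmt14 (d : ℕ) (D : Matrix (Fin d) (Fin d) ℝ) (hD : D.PosSemidef)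
    (lam : ℝ) (hlam : 0 < lam) (v : EuclideanSpace ℝ (Fin d)) (hvnorm : ‖v‖ = 1)
    (hker : ∀ q : EuclideanSpace ℝ (Fin d),
      (D *ᵥ fun i => q i) = 0 ↔ ∃ t : ℝ, q = t • v)
    (ℓ h : EuclideanSpace ℝ (Fin d) → ℝ)
    (hℓ : ∀ q : EuclideanSpace ℝ (Fin d),
      ℓ q = (fun i => q i) ⬝ᵥ (D *ᵥ fun i => q i) + lam * (‖q‖ ^ 2 - 1) ^ 2)
    (hh : ∀ q : EuclideanSpace ℝ (Fin d),
      h q = ‖q - v‖ ^ 2 / (1 + ‖q‖ ^ 2)) :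
    ∀ q : EuclideanSpace ℝ (Fin d), 0 < (inner ℝ v q : ℝ) →
      (0 ≤ (inner ℝ (gradient h q) (gradient ℓ q) : ℝ)) ∧
      ((inner ℝ (gradient h q) (gradient ℓ q) : ℝ) = 0 ↔ q = v) := by
  intro q hq
  set T := (Matrix.toEuclideanLin D).toContinuousLinearMap
  have hT : T.IsPositive := Matrix.isPositive_toEuclideanLin_iff.mpr hD
  have hkerT : ∀ x, T x = 0 ↔ ∃ t : ℝ, x = t • v := fun x =>
    (WithLp.toLp_eq_zero 2).trans (hker x)
  have hℓT : ℓ = penalizedQuadForm T lam := funext fun x => by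
    rw [hℓ, penalizedQuadForm, EuclideanSpace.inner_eq_star_dotProduct, star_trivial]
    rfl
  have hhv : h = liapunovFn v := funext hh
  rw [hℓT, hhv]
  exact ⟨inner_gradient_liapunovFn_penalizedQuadForm_nonneg hT ((hkerT v).mpr ⟨1, by simp⟩)
      hvnorm hlam.le hq,
    inner_gradient_liapunovFn_penalizedQuadForm_eq_zero_iff hT hkerT hvnorm hlam hq⟩
end
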